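/- Every finite word w has exactly |w|+1 distinct privileged factors (counting the empty word); that is, every word is rich in privileged words. -/

import Mathlib

/-- Number of occurrences of `u` as a factor of `w` (positions are 0-indexed). -/
noncomputable def occCount {A : Type*} (u w : List A) : ℕ :=
  Set.ncard {i : ℕ | i + u.length ≤ w.length ∧ (w.drop i).take u.length = u}

/-- `v` is a complete first return to `u`: `u` is a prefix and a suffix of `v`,
and `u` has exactly two occurrences in `v`. -/
def IsCompleteFirstReturn {A : Type*} (v u : List A) : Prop :=
  u <+: v ∧ u <:+ v ∧ occCount u v = 2

/-- Privileged words: the empty word and the single letters are privileged, and a word of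
length at least 2 is privileged if it is a complete first return to a shorter privileged word. -/
inductive Privileged {A : Type*} : List A → Prop where
  | nil : Privileged ([] : List A)
  | single (a : A) : Privileged [a]
  | ret (w u : List A) : 2 ≤ w.length → u.length < w.length → Privileged u →
      IsCompleteFirstReturn w u → Privileged w

/-- A complete return word: a complete first return to some word
(the empty word counted by convention; letters are complete first returns to the empty word). -/
def IsCompleteReturnWord {A : Type*} (v : List A) : Prop :=
  v = [] ∨ ∃ u : List A, IsCompleteFirstReturn v u

/-- Position `i` of `w` (1-based, `1 ≤ i ≤ |w|`) introduces the factor `u`: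
`u` occurs in `w` ending at position `i` and `u` occurs exactly once in the prefix `w[1,i]`. -/
def Introduces {A : Type*} (w : List A) (i : ℕ) (u : List A) : Prop :=
  1 ≤ i ∧ i ≤ w.length ∧ u <:+ w.take i ∧ occCount u (w.take i) = 1

/-- A finite word is rich if it has exactly `|w| + 1` distinct palindromic factors. -/
noncomputable def RichWord {A : Type*} (w : List A) : Prop :=
  Set.ncard {u : List A | u <:+: w ∧ u.reverse = u} = w.length + 1

/-- `u` is a (finite) factor of the infinite word `w`. -/
def IsFactorInf {A : Type*} (w : ℕ → A) (u : List A) : Prop :=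
  ∃ i : ℕ, u = (List.range u.length).map fun k => w (i + k)

/-- A Q-property of finite words. -/
structure IsQProperty {A : Type*} (Q : List A → Prop) : Prop where
  q_nil : Q []
  q_single : ∀ a : A, Q [a]
  ends_at_every_position : ∀ (w : List A) (i : ℕ), 1 ≤ i → i ≤ w.length →
    ∃ u : List A, u ≠ [] ∧ u <:+ w.take i ∧ Q u
  introduces_at_most_one : ∀ (w : List A) (i : ℕ) (u v : List A),
    Introduces w i u → Introduces w i v → Q u → Q v → u = v

/-- Q-complexity of an infinite word: the number of distinct factors of length `n`
having property `Q`. -/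
noncomputable def qComplexityInf {A : Type*} (w : ℕ → A) (Q : List A → Prop) (n : ℕ) : ℕ :=
  Set.ncard {u : List A | IsFactorInf w u ∧ Q u ∧ u.length = n}

/-- Privileged complexity of an infinite word. -/
noncomputable def privComplexityInf {A : Type*} (w : ℕ → A) (n : ℕ) : ℕ :=
  Set.ncard {u : List A | IsFactorInf w u ∧ Privileged u ∧ u.length = n}

/-- Palindromic complexity of an infinite word. -/
noncomputable def palComplexityInf {A : Type*} (w : ℕ → A) (n : ℕ) : ℕ :=
  Set.ncard {u : List A | IsFactorInf w u ∧ u.reverse = u ∧ u.length = n}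

/-- An infinite word is ultimately periodic if it is of the form `u v v v ⋯`
with `v` nonempty. -/
def UltimatelyPeriodic {A : Type*} (w : ℕ → A) : Prop :=
  ∃ u v : List A, v ≠ [] ∧ ∀ n : ℕ, w n =
    if n < u.length then u.getD n (w 0)
    else v.getD ((n - u.length) % v.length) (w 0)

/-- An infinite word is Sturmian if it has exactly `n + 1` distinct factors of
length `n` for every `n`. -/
def Sturmian {A : Type*} (w : ℕ → A) : Prop :=
  ∀ n : ℕ, Set.ncard {u : List A | IsFactorInf w u ∧ u.length = n} = n + 1

/-- A finite binary word is balanced: its set of factors is balanced. -/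
def BalancedWord (x : List Bool) : Prop :=
  ∀ u v : List Bool, u <:+: x → v <:+: x → u.length = v.length →
    ((u.count true : ℤ) - (v.count true : ℤ)).natAbs ≤ 1

/-- `u` is a right special factor of the infinite word `w`. -/
def RightSpecial {A : Type*} (w : ℕ → A) (u : List A) : Prop :=
  ∃ a b : A, a ≠ b ∧ IsFactorInf w (u ++ [a]) ∧ IsFactorInf w (u ++ [b])

/-- The Thue-Morse word: the `n`-th letter is the parity of the number of ones in the
binary expansion of `n` (`false` = 0, `true` = 1). -/
def thueMorse (n : ℕ) : Bool := (Nat.digits 2 n).count 1 % 2 == 1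

/-!
Appending a letter `x` to a word `xs` creates exactly one new privileged factor: the longest
privileged suffix `u` of `xs ++ [x]`. It is new, since if `u` also occurred earlier, the suffix
starting at its last earlier occurrence would be a complete first return to `u`, hence a longer
privileged suffix. Any other privileged suffix `v` is a shorter suffix of `u`, and a privileged
suffix of a privileged word is also a prefix of it, so `v` already occurs in `xs`.
-/

namespace List

variable {A : Type*}

def OccursAt (u w : List A) (i : ℕ) : Prop :=
  i + u.length ≤ w.length ∧ (w.drop i).take u.length = u

theorem occCount_eq_ncard (u w : List A) : occCount u w = {i | OccursAt u w i}.ncard := rfl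

theorem finite_setOf_occursAt (u w : List A) : {i | OccursAt u w i}.Finite :=
  (Set.finite_Iic w.length).subset fun _ hi => le_of_add_le_left hi.1

theorem occursAt_iff_prefix {u w : List A} {i : ℕ} :
    OccursAt u w i ↔ i + u.length ≤ w.length ∧ u <+: w.drop i := by
  rw [OccursAt, prefix_iff_eq_take, eq_comm]

theorem occursAt_zero_iff {u w : List A} : OccursAt u w 0 ↔ u <+: w := by
  rw [occursAt_iff_prefix, drop_zero, zero_add, and_iff_right_of_imp IsPrefix.length_le]

theorem occursAt_sub_length_iff {u w : List A} :
    OccursAt u w (w.length - u.length) ↔ u <:+ w := by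
  rw [occursAt_iff_prefix]
  constructor
  · rintro ⟨hle, hp⟩
    exact suffix_iff_eq_drop.2 (hp.eq_of_length (by rw [length_drop]; omega))
  · intro h
    exact ⟨by have := h.length_le; omega, suffix_iff_eq_drop.1 h ▸ prefix_rfl⟩

theorem occursAt_cons_succ {u t : List A} {a : A} {i : ℕ} :
    OccursAt u (a :: t) (i + 1) ↔ OccursAt u t i := by
  simp only [OccursAt, length_cons, drop_succ_cons, Nat.add_right_comm i 1,
    Nat.add_le_add_iff_right]

theorem OccursAt.append {u w : List A} {i : ℕ} (h : OccursAt u w i) (t : List A) :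
    OccursAt u (w ++ t) i := by
  rw [occursAt_iff_prefix] at *
  rw [length_append, drop_append_of_le_length (by omega)]
  exact ⟨by omega, h.2.trans (prefix_append _ _)⟩

theorem OccursAt.of_prefix {u v w : List A} {i : ℕ} (h : OccursAt u w i) (hv : v <+: u) :
    OccursAt v w i := by
  rw [occursAt_iff_prefix] at *
  exact ⟨by have := hv.length_le; omega, hv.trans h.2⟩

theorem infix_iff_exists_occursAt {u w : List A} : u <:+: w ↔ ∃ i, OccursAt u w i := by
  constructor
  · rintro ⟨s, t, rfl⟩
    exact ⟨s.length, occursAt_iff_prefix.2 ⟨by simp, by simp⟩⟩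
  · rintro ⟨i, hi⟩
    exact (occursAt_iff_prefix.1 hi).2.isInfix.trans (drop_suffix i w).isInfix

theorem IsPrefix.infix_dropLast_of_isSuffix {v u w : List A} (hvu : v <+: u)
    (hlt : v.length < u.length) (huw : u <:+ w) : v <:+: w.dropLast := by
  obtain ⟨p, rfl⟩ := huw
  rw [dropLast_append_of_ne_nil (ne_nil_of_length_pos (by omega))]
  have : v <+: u.dropLast :=
    prefix_of_prefix_length_le hvu (dropLast_prefix u) (by simp only [length_dropLast]; omega)
  exact this.isInfix.trans (suffix_append p _).isInfix

end List

section

open List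

variable {A : Type*}

theorem isCompleteFirstReturn_iff {u v : List A} (h : u.length < v.length) :
    IsCompleteFirstReturn v u ↔ {i | OccursAt u v i} = {0, v.length - u.length} := by
  have hne : (0 : ℕ) ≠ v.length - u.length := by omega
  constructor
  · rintro ⟨hp, hs, hcount⟩
    have hsub : ({0, v.length - u.length} : Set ℕ) ⊆ {i | OccursAt u v i} :=
      Set.insert_subset (occursAt_zero_iff.2 hp)
        (Set.singleton_subset_iff.2 (occursAt_sub_length_iff.2 hs))
    refine (Set.eq_of_subset_of_ncard_le hsub ?_ (finite_setOf_occursAt u v)).symm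
    rw [← occCount_eq_ncard, hcount, Set.ncard_pair hne]
  · intro hS
    have h0 : 0 ∈ {i | OccursAt u v i} := hS ▸ Set.mem_insert _ _
    have hend : v.length - u.length ∈ {i | OccursAt u v i} := hS ▸ Set.mem_insert_of_mem _ rfl
    exact ⟨occursAt_zero_iff.1 h0, occursAt_sub_length_iff.1 hend,
      by rw [occCount_eq_ncard, hS, Set.ncard_pair hne]⟩

theorem Privileged.isPrefix_of_isSuffix {u v : List A} (hu : Privileged u) (hv : Privileged v)
    (h : u <:+ v) : u <+: v := by
  rcases h.length_le.eq_or_lt with hlen | hlt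
  · exact h.eq_of_length hlen ▸ prefix_rfl
  cases hv with
  | nil => simp at hlt
  | single a => rw [length_eq_zero_iff.1 (by simpa using hlt : u.length = 0)]; exact nil_prefix
  | ret v p _ hpv hp hret =>
    rcases le_or_gt u.length p.length with hle | hgt
    · exact (hu.isPrefix_of_isSuffix hp (suffix_of_suffix_length_le h hret.2.1 hle)).trans hret.1
    · -- otherwise `p` would occur in `v` strictly between its only two occurrences
      have hpu : p <+: u :=
        hp.isPrefix_of_isSuffix hu (suffix_of_suffix_length_le hret.2.1 h hgt.le)
      have hocc : v.length - u.length ∈ {i | OccursAt p v i} :=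
        (occursAt_sub_length_iff.2 h).of_prefix hpu
      rw [(isCompleteFirstReturn_iff hpv).1 hret] at hocc
      simp only [Set.mem_insert_iff, Set.mem_singleton_iff] at hocc
      omega
termination_by v.length

theorem exists_isCompleteFirstReturn_suffix {u : List A} :
    ∀ {w : List A}, u <:+ w → (∃ j, j + u.length < w.length ∧ OccursAt u w j) →
      ∃ v, v <:+ w ∧ u.length < v.length ∧ IsCompleteFirstReturn v u
  | [], _, ⟨_, hj, _⟩ => by simp at hj
  | a :: t, hs, ⟨j, hj, hocc⟩ => by
    by_cases ht : ∃ k, k + u.length < t.length ∧ OccursAt u t k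
    · obtain ⟨k, hk, hkocc⟩ := ht
      obtain ⟨v, hvt, hv⟩ := exists_isCompleteFirstReturn_suffix
        (suffix_of_suffix_length_le hs (suffix_cons a t) (by omega)) ⟨k, hk, hkocc⟩
      exact ⟨v, hvt.trans (suffix_cons a t), hv⟩
    · -- `u` does not recur in `t` before its end, so `a :: t` itself is the return
      push Not at ht
      have hlt : u.length < (a :: t).length := by omega
      refine ⟨a :: t, suffix_rfl, hlt, (isCompleteFirstReturn_iff hlt).2 (Set.ext fun i => ?_)⟩
      simp only [Set.mem_ofPred_eq, Set.mem_insert_iff, Set.mem_singleton_iff, length_cons]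
      constructor
      · intro hi
        rcases i with _ | k
        · exact .inl rfl
        · have hk := occursAt_cons_succ.1 hi
          have := hk.1
          by_contra hne
          exact ht k (by omega) hk
      · rintro (rfl | rfl)
        · rcases j with _ | k
          · exact hocc
          · have hk := occursAt_cons_succ.1 hocc
            simp only [length_cons] at hj
            exact absurd hk (ht k (by omega))
        · exact occursAt_sub_length_iff.2 hs

def IsLongestPrivilegedSuffix (u w : List A) : Prop :=
  u <:+ w ∧ Privileged u ∧ ∀ v, v <:+ w → Privileged v → v.length ≤ u.length

theorem exists_isLongestPrivilegedSuffix (w : List A) : ∃ u, IsLongestPrivilegedSuffix u w := by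
  obtain ⟨u, ⟨hu, hpu⟩, hmax⟩ := Set.exists_max_image {v | v <:+ w ∧ Privileged v} length
    ((finite_toSet w.tails).subset fun v hv => (mem_tails v w).2 hv.1) ⟨[], nil_suffix, .nil⟩
  exact ⟨u, hu, hpu, fun v hv hpv => hmax v ⟨hv, hpv⟩⟩

theorem IsLongestPrivilegedSuffix.not_infix {xs u : List A} {x : A}
    (h : IsLongestPrivilegedSuffix u (xs ++ [x])) : ¬u <:+: xs := by
  obtain ⟨hu, hpu, hmax⟩ := h
  intro hinf
  obtain ⟨j, hj⟩ := infix_iff_exists_occursAt.1 hinf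
  have hx := hmax [x] (suffix_append xs [x]) (.single x)
  obtain ⟨v, hvs, hlt, hret⟩ := exists_isCompleteFirstReturn_suffix hu
    ⟨j, by simp only [length_append, length_singleton]; have := hj.1; omega, hj.append [x]⟩
  have := hmax v hvs (.ret v u (by simp only [length_singleton] at hx; omega) hlt hpu hret)
  omega

def privilegedFactors (w : List A) : Set (List A) := {u | u <:+: w ∧ Privileged u}

theorem finite_privilegedFactors (w : List A) : (privilegedFactors w).Finite :=
  (finite_toSet w.sublists).subset fun _ hu => mem_sublists.2 hu.1.sublist

theorem privilegedFactors_nil : privilegedFactors ([] : List A) = {[]} := by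
  ext u
  simp only [privilegedFactors, infix_nil, Set.mem_ofPred_eq, Set.mem_singleton_iff,
    and_iff_left_iff_imp]
  rintro rfl
  exact .nil

theorem exists_privilegedFactors_append_singleton (xs : List A) (x : A) :
    ∃ u ∉ privilegedFactors xs,
      privilegedFactors (xs ++ [x]) = insert u (privilegedFactors xs) := by
  obtain ⟨u, hlong⟩ := exists_isLongestPrivilegedSuffix (xs ++ [x])
  have ⟨hu, hpu, hmax⟩ := hlong
  refine ⟨u, fun h => hlong.not_infix h.1, Set.ext fun v => ⟨fun ⟨hinf, hpv⟩ => ?_, ?_⟩⟩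
  · rcases infix_concat_iff.1 hinf with hvs | hvxs
    · rcases eq_or_ne v u with rfl | hvu
      · exact .inl rfl
      have hle := hmax v hvs hpv
      have hvu' : v <:+ u := suffix_of_suffix_length_le hvs hu hle
      have hlt : v.length < u.length := lt_of_le_of_ne hle fun h => hvu (hvu'.eq_of_length h)
      have := (hpv.isPrefix_of_isSuffix hpu hvu').infix_dropLast_of_isSuffix hlt hu
      exact .inr ⟨by rwa [dropLast_concat] at this, hpv⟩
    · exact .inr ⟨hvxs, hpv⟩
  · rintro (rfl | ⟨hinf, hpv⟩)
    · exact ⟨hu.isInfix, hpu⟩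
    · exact ⟨hinf.trans (prefix_append xs [x]).isInfix, hpv⟩

theorem ncard_privilegedFactors (w : List A) : (privilegedFactors w).ncard = w.length + 1 := by
  induction w using reverseRecOn with
  | nil => simp [privilegedFactors_nil]
  | append_singleton xs x ih =>
    obtain ⟨u, hu, hins⟩ := exists_privilegedFactors_append_singleton xs x
    rw [hins, Set.ncard_insert_of_notMem hu (finite_privilegedFactors xs), ih, length_append,
      length_singleton]

end

/-- Every finite word `w` has exactly `|w| + 1` distinct privileged factors
(the empty word counted), i.e. every word is rich in privileged words. -/
theorem privileged_factors_count {A : Type*} (w : List A) :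
    Set.ncard {u : List A | u <:+: w ∧ Privileged u} = w.length + 1 :=
  ncard_privilegedFactors w
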